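/- If t is a simply typed λ-term whose redexes all have degree at most d, then the d-fold iterated parallel reduct t*^d is the β-normal form of t. -/

import Mathlib

/-- Simple types over a single base type `o`. -/
inductive Ty : Type
  | o : Ty
  | arr : Ty → Ty → Ty
deriving DecidableEq

/-- Degree of a simple type: the height of its syntax tree. -/
def Ty.deg : Ty → Nat
  | .o => 0
  | .arr a b => max a.deg b.deg + 1

/-- Church-style simply typed λ-terms (de Bruijn indices, annotated λ). -/
inductive CTm : Type
  | var : Nat → CTm
  | lam : Ty → CTm → CTm
  | app : CTm → CTm → CTm
deriving DecidableEq

namespace CTm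

def lift (d : Nat) : Nat → CTm → CTm
  | k, var n => if n < k then var n else var (n + d)
  | k, lam A t => lam A (lift d (k + 1) t)
  | k, app t u => app (lift d k t) (lift d k u)

def subst : CTm → Nat → CTm → CTm
  | var n, k, u => if n = k then lift k 0 u else if k < n then var (n - 1) else var n
  | lam A t, k, u => lam A (subst t (k + 1) u)
  | app a b, k, u => app (subst a k u) (subst b k u)

/-- Full parallel reduction `t*`. -/
def pstar : CTm → CTm
  | var n => var n
  | lam A t => lam A (pstar t)
  | app (lam _ t) u => subst (pstar t) 0 (pstar u)
  | app (var n) u => app (var n) (pstar u)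
  | app (app a b) u => app (pstar (app a b)) (pstar u)

/-- Type of a term in a context (de Bruijn): `some A` iff well-typed of type `A`. -/
def typeof : List Ty → CTm → Option Ty
  | Γ, var n => Γ[n]?
  | Γ, lam A t => (typeof (A :: Γ) t).map (Ty.arr A)
  | Γ, app t u =>
    match typeof Γ t, typeof Γ u with
    | some (.arr A B), some A' => if A = A' then some B else none
    | _, _ => none

/-- All redexes of `t` (in context `Γ`) have degree at most `d`.
The degree of a redex `(λx^A.t) u` with `t : B` is `deg (A → B)`. -/
def RedexBound (d : Nat) : List Ty → CTm → Prop
  | _, var _ => True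
  | Γ, lam A t => RedexBound d (A :: Γ) t
  | Γ, app (lam A t) u =>
      (∀ B, typeof (A :: Γ) t = some B → (Ty.arr A B).deg ≤ d) ∧
        RedexBound d (A :: Γ) t ∧ RedexBound d Γ u
  | Γ, app (var n) u => RedexBound d Γ (var n) ∧ RedexBound d Γ u
  | Γ, app (app a b) u => RedexBound d Γ (app a b) ∧ RedexBound d Γ u

/-- β-normal: contains no redex. -/
def Normal : CTm → Prop
  | var _ => True
  | lam _ t => Normal t
  | app t u => (∀ A t', t ≠ lam A t') ∧ Normal t ∧ Normal u

/-- Single-step β-reduction. -/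
inductive Step : CTm → CTm → Prop
  | beta (A : Ty) (t u : CTm) : Step (app (lam A t) u) (subst t 0 u)
  | appL {t t' : CTm} (u : CTm) : Step t t' → Step (app t u) (app t' u)
  | appR (t : CTm) {u u' : CTm} : Step u u' → Step (app t u) (app t u')
  | lam (A : Ty) {t t' : CTm} : Step t t' → Step (lam A t) (lam A t')

/-- β-convertibility. -/
def Conv : CTm → CTm → Prop := Relation.EqvGen Step

end CTm

/-!
Parallel reduction contracts every redex of `t`, and each redex of `t*` is either the image of a
redex of `t` or was created by a contraction `(λx^A.s) u ↦ s[u/x]` of degree `deg (A → B)`.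
Created redexes come in two kinds: `u` lands in the head of an application `x v` of `s`, giving a
redex of degree `deg A`; or `(λx^A.s) u` was itself the function part of an application and
`s[u/x]` is an abstraction of type `B`, giving a redex of degree `deg B`. Both are smaller than
`deg (A → B)`, so `t ↦ t*` lowers the redex bound of a typed term by one. A typed term with
redex bound `0` is normal, since every redex has degree at least `1`, and `t →β* t*`.
-/

theorem Ty.deg_lt_deg_arr_left (A B : Ty) : A.deg < (A.arr B).deg := by
  simp only [Ty.deg]
  omega

theorem Ty.deg_lt_deg_arr_right (A B : Ty) : B.deg < (A.arr B).deg := by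
  simp only [Ty.deg]
  omega

namespace CTm

theorem typeof_lift (Ξ : List Ty) :
    ∀ (t : CTm) (Δ Γ : List Ty),
      typeof (Δ ++ Ξ ++ Γ) (lift Ξ.length Δ.length t) = typeof (Δ ++ Γ) t
  | var n, Δ, Γ => by
    simp only [lift, List.append_assoc]
    split
    · simp only [typeof]
      rw [List.getElem?_append_left (by omega), List.getElem?_append_left (by omega)]
    · simp only [typeof]
      rw [List.getElem?_append_right (l₁ := Δ) (by omega),
        List.getElem?_append_right (l₁ := Δ) (by omega),
        List.getElem?_append_right (l₁ := Ξ) (by omega)]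
      congr 1
      omega
  | lam A t, Δ, Γ => by
    simpa only [lift, typeof, List.cons_append, List.length_cons] using
      congrArg (Option.map (Ty.arr A)) (typeof_lift Ξ t (A :: Δ) Γ)
  | app a b, Δ, Γ => by
    simp only [lift, typeof, typeof_lift Ξ a Δ Γ, typeof_lift Ξ b Δ Γ]

theorem typeof_weaken (Δ Γ : List Ty) (u : CTm) :
    typeof (Δ ++ Γ) (lift Δ.length 0 u) = typeof Γ u :=
  typeof_lift Δ u [] Γ

theorem typeof_subst {Γ : List Ty} {u : CTm} {A : Ty} (hu : typeof Γ u = some A) :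
    ∀ (t : CTm) (Δ : List Ty),
      typeof (Δ ++ Γ) (subst t Δ.length u) = typeof (Δ ++ A :: Γ) t
  | var n, Δ => by
    simp only [subst]
    split
    · subst n
      simp [typeof, typeof_weaken, hu]
    · split
      · simp only [typeof]
        rw [List.getElem?_append_right (by omega), List.getElem?_append_right (by omega),
          show n - Δ.length = (n - 1 - Δ.length) + 1 by omega]
        simp
      · simp only [typeof]
        rw [List.getElem?_append_left (by omega), List.getElem?_append_left (by omega)]
  | lam B t, Δ => by
    simpa only [subst, typeof, List.cons_append, List.length_cons] using
      congrArg (Option.map (Ty.arr B)) (typeof_subst hu t (B :: Δ))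
  | app a b, Δ => by
    simp only [subst, typeof, typeof_subst hu a Δ, typeof_subst hu b Δ]

theorem typeof_subst_zero {Γ : List Ty} {u : CTm} {A : Ty} (hu : typeof Γ u = some A)
    (t : CTm) : typeof Γ (subst t 0 u) = typeof (A :: Γ) t :=
  typeof_subst hu t []

theorem typeof_app_eq_some {Γ : List Ty} {a b : CTm} {C : Ty} :
    typeof Γ (app a b) = some C ↔
      ∃ A, typeof Γ a = some (A.arr C) ∧ typeof Γ b = some A := by
  constructor
  · intro h
    simp only [typeof] at h
    split at h
    · next A B A' ha hb =>
      split_ifs at h with hA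
      cases h
      exact ⟨A', hA ▸ ha, hb⟩
    · cases h
  · rintro ⟨A, ha, hb⟩
    simp [typeof, ha, hb]

theorem typeof_lam_eq_some {Γ : List Ty} {B : Ty} {s : CTm} {C : Ty} :
    typeof Γ (lam B s) = some C ↔ ∃ D, typeof (B :: Γ) s = some D ∧ B.arr D = C := by
  simp [typeof]

theorem typeof_pstar : ∀ (t : CTm) {Γ : List Ty} {A : Ty},
    typeof Γ t = some A → typeof Γ (pstar t) = some A
  | var _, _, _, h => h
  | lam B s, _, _, h => by
    obtain ⟨D, hs, rfl⟩ := typeof_lam_eq_some.1 h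
    exact typeof_lam_eq_some.2 ⟨D, typeof_pstar s hs, rfl⟩
  | app (var _) b, _, _, h => by
    obtain ⟨B, ha, hb⟩ := typeof_app_eq_some.1 h
    exact typeof_app_eq_some.2 ⟨B, ha, typeof_pstar b hb⟩
  | app (lam B s) b, _, _, h => by
    obtain ⟨B', hlam, hb⟩ := typeof_app_eq_some.1 h
    obtain ⟨D, hs, hBD⟩ := typeof_lam_eq_some.1 hlam
    cases hBD
    rw [pstar, typeof_subst_zero (typeof_pstar b hb)]
    exact typeof_pstar s hs
  | app (app a₁ a₂) b, _, _, h => by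
    obtain ⟨B, ha, hb⟩ := typeof_app_eq_some.1 h
    exact typeof_app_eq_some.2 ⟨B, typeof_pstar (app a₁ a₂) ha, typeof_pstar b hb⟩

theorem redexBound_lift (Ξ : List Ty) {d : Nat} : ∀ (t : CTm) (Δ Γ : List Ty),
    RedexBound d (Δ ++ Γ) t → RedexBound d (Δ ++ Ξ ++ Γ) (lift Ξ.length Δ.length t)
  | var _, Δ, Γ, _ => by
    simp only [lift]
    split <;> trivial
  | lam A t, Δ, Γ, h => redexBound_lift Ξ t (A :: Δ) Γ h
  | app (var _) b, Δ, Γ, h => by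
    simp only [lift]
    split <;> exact ⟨trivial, redexBound_lift Ξ b Δ Γ h.2⟩
  | app (lam A s) b, Δ, Γ, ⟨hdeg, hs, hb⟩ =>
    ⟨fun B hB => hdeg B (typeof_lift Ξ s (A :: Δ) Γ ▸ hB),
      redexBound_lift Ξ s (A :: Δ) Γ hs, redexBound_lift Ξ b Δ Γ hb⟩
  | app (app a₁ a₂) b, Δ, Γ, ⟨ha, hb⟩ =>
    ⟨redexBound_lift Ξ (app a₁ a₂) Δ Γ ha, redexBound_lift Ξ b Δ Γ hb⟩

theorem redexBound_app {d : Nat} {Γ : List Ty} {a b : CTm} {B : Ty}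
    (ha : RedexBound d Γ a) (hb : RedexBound d Γ b) (haB : typeof Γ a = some B)
    (hdeg : ∀ A s, a = lam A s → B.deg ≤ d) :
    RedexBound d Γ (app a b) := by
  cases a with
  | var _ => exact ⟨trivial, hb⟩
  | app a₁ a₂ => exact ⟨ha, hb⟩
  | lam A s =>
    refine ⟨fun C hC => ?_, ha, hb⟩
    obtain rfl : A.arr C = B := by simpa [typeof, hC] using haB
    exact hdeg A s rfl

theorem redexBound_subst {Γ : List Ty} {u : CTm} {A : Ty} {d : Nat}
    (hu : typeof Γ u = some A) (hub : RedexBound d Γ u) (hA : A.deg ≤ d) :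
    ∀ (t : CTm) (Δ : List Ty),
      RedexBound d (Δ ++ A :: Γ) t → RedexBound d (Δ ++ Γ) (subst t Δ.length u)
  | var _, Δ, _ => by
    simp only [subst]
    split
    · exact redexBound_lift Δ u [] Γ hub
    · split <;> trivial
  | lam B t, Δ, h => redexBound_subst hu hub hA t (B :: Δ) h
  | app (var _) b, Δ, ⟨_, hb⟩ => by
    have hb' := redexBound_subst hu hub hA b Δ hb
    simp only [subst]
    split
    · -- `u` is substituted into head position: the only redex this creates has degree `deg A`
      exact redexBound_app (redexBound_lift Δ u [] Γ hub) hb' (by rw [typeof_weaken, hu])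
        fun _ _ _ => hA
    · split <;> exact ⟨trivial, hb'⟩
  | app (lam B s) b, Δ, ⟨hdeg, hs, hb⟩ =>
    ⟨fun C hC => hdeg C (typeof_subst hu s (B :: Δ) ▸ hC),
      redexBound_subst hu hub hA s (B :: Δ) hs, redexBound_subst hu hub hA b Δ hb⟩
  | app (app a₁ a₂) b, Δ, ⟨ha, hb⟩ =>
    ⟨redexBound_subst hu hub hA (app a₁ a₂) Δ ha, redexBound_subst hu hub hA b Δ hb⟩

theorem redexBound_pstar {d : Nat} : ∀ (t : CTm) {Γ : List Ty} {A : Ty},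
    typeof Γ t = some A → RedexBound (d + 1) Γ t → RedexBound d Γ (pstar t)
  | var _, _, _, _, _ => trivial
  | lam B s, _, _, h, hs => by
    obtain ⟨D, hsD, -⟩ := typeof_lam_eq_some.1 h
    exact redexBound_pstar s hsD hs
  | app (var _) b, _, _, h, ⟨_, hb⟩ => by
    obtain ⟨B, -, hbB⟩ := typeof_app_eq_some.1 h
    exact ⟨trivial, redexBound_pstar b hbB hb⟩
  | app (lam B s) b, _, _, h, ⟨hdeg, hs, hb⟩ => by
    obtain ⟨B', hlam, hbB⟩ := typeof_app_eq_some.1 h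
    obtain ⟨D, hsD, hBD⟩ := typeof_lam_eq_some.1 hlam
    obtain ⟨rfl, rfl⟩ := Ty.arr.inj hBD
    have hB : B.deg ≤ d :=
      Nat.le_of_lt_succ ((Ty.deg_lt_deg_arr_left B D).trans_le (hdeg D hsD))
    exact redexBound_subst (typeof_pstar b hbB) (redexBound_pstar b hbB hb) hB (pstar s) []
      (redexBound_pstar s hsD hs)
  | app (app a₁ a₂) b, _, _, h, ⟨ha, hb⟩ => by
    obtain ⟨B, haB, hbB⟩ := typeof_app_eq_some.1 h
    refine redexBound_app (redexBound_pstar (app a₁ a₂) haB ha) (redexBound_pstar b hbB hb)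
      (typeof_pstar (app a₁ a₂) haB) fun _ _ hlam => ?_
    -- `(a₁ a₂)*` is an abstraction only if `a₁ = λ.s₁`; then `B` is the codomain of the
    -- type of `a₁`
    cases a₁ with
    | var _ => simp [pstar] at hlam
    | app _ _ => simp [pstar] at hlam
    | lam _ _ =>
      obtain ⟨_, hlam₁, -⟩ := typeof_app_eq_some.1 haB
      obtain ⟨_, hs₁, hBC⟩ := typeof_lam_eq_some.1 hlam₁
      cases hBC
      exact Nat.le_of_lt_succ ((Ty.deg_lt_deg_arr_right _ _).trans_le (ha.1 _ hs₁))

theorem normal_of_redexBound_zero : ∀ (t : CTm) {Γ : List Ty} {A : Ty},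
    typeof Γ t = some A → RedexBound 0 Γ t → Normal t
  | var _, _, _, _, _ => trivial
  | lam B s, _, _, h, hs => by
    obtain ⟨D, hsD, -⟩ := typeof_lam_eq_some.1 h
    exact normal_of_redexBound_zero s hsD hs
  | app (var _) b, _, _, h, ⟨_, hb⟩ => by
    obtain ⟨B, -, hbB⟩ := typeof_app_eq_some.1 h
    exact ⟨fun _ _ h => CTm.noConfusion h, trivial, normal_of_redexBound_zero b hbB hb⟩
  | app (lam _ s) b, _, _, h, ⟨hdeg, _⟩ => by
    obtain ⟨_, hlam, -⟩ := typeof_app_eq_some.1 h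
    obtain ⟨D, hsD, -⟩ := typeof_lam_eq_some.1 hlam
    simpa [Ty.deg] using hdeg D hsD
  | app (app a₁ a₂) b, _, _, h, ⟨ha, hb⟩ => by
    obtain ⟨B, haB, hbB⟩ := typeof_app_eq_some.1 h
    exact ⟨fun _ _ h => CTm.noConfusion h, normal_of_redexBound_zero (app a₁ a₂) haB ha,
      normal_of_redexBound_zero b hbB hb⟩

open Relation

theorem steps_app_left {t t' : CTm} (u : CTm) (h : ReflTransGen Step t t') :
    ReflTransGen Step (app t u) (app t' u) :=
  h.lift (app · u) fun _ _ => Step.appL u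

theorem steps_app_right (t : CTm) {u u' : CTm} (h : ReflTransGen Step u u') :
    ReflTransGen Step (app t u) (app t u') :=
  h.lift (app t) fun _ _ => Step.appR t

theorem steps_lam (A : Ty) {t t' : CTm} (h : ReflTransGen Step t t') :
    ReflTransGen Step (lam A t) (lam A t') :=
  h.lift (lam A) fun _ _ => Step.lam A

theorem steps_pstar : ∀ t : CTm, ReflTransGen Step t (pstar t)
  | var _ => .refl
  | lam A s => steps_lam A (steps_pstar s)
  | app (var _) b => steps_app_right _ (steps_pstar b)
  | app (lam A s) b =>
    ((steps_app_left b (steps_lam A (steps_pstar s))).trans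
      (steps_app_right _ (steps_pstar b))).tail (Step.beta A (pstar s) (pstar b))
  | app (app a₁ a₂) b =>
    (steps_app_left b (steps_pstar (app a₁ a₂))).trans (steps_app_right _ (steps_pstar b))

end CTm

/-- if all redexes of the simply typed term `t` have degree at most
`d`, then the `d`-fold iterated parallel reduct of `t` is the β-normal form of
`t`: it is normal and reachable from `t` by β-reduction. -/
theorem pstar_iterate_normal_form {Γ : List Ty} {t : CTm} {A : Ty} {d : Nat}
    (ht : CTm.typeof Γ t = some A) (hb : CTm.RedexBound d Γ t) :
    CTm.Normal (CTm.pstar^[d] t) ∧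
      Relation.ReflTransGen CTm.Step t (CTm.pstar^[d] t) := by
  induction d generalizing t with
  | zero => exact ⟨CTm.normal_of_redexBound_zero t ht hb, .refl⟩
  | succ d ih =>
    obtain ⟨hnormal, hsteps⟩ := ih (CTm.typeof_pstar t ht) (CTm.redexBound_pstar t ht hb)
    exact ⟨hnormal, (CTm.steps_pstar t).trans hsteps⟩
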